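/- arXiv:1204.3938 — 2 statements merged into one kernel-verified Lean document; each statement's English description precedes it below -/
import Mathlib

section
/- Let m ∈ (1,2) and let η be a real number with |η| ≤ 1/2. Then (1+η)^m ≥ 1 + m·η + (m(m-1)/2)·(2/3)^{2-m}·η². -/
/-!
The function `g x = (1 + x) ^ m - c * x ^ 2` has second derivative
`m (m - 1) (1 + x) ^ (m - 2) - 2 c`, which is nonnegative for `x ≤ r` as soon as
`2 c ≤ m (m - 1) (1 + r) ^ (m - 2)`, because `m - 2 ≤ 0`. So `g` is convex and lies above its
tangent line `1 + m x` at `0`. With `r = 1/2` the constant is `(3/2) ^ (m - 2) = (2/3) ^ (2 - m)`.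
-/

open Set

theorem ConvexOn.add_mul_sub_le_of_hasDerivAt {S : Set ℝ} {f : ℝ → ℝ} {f' x y : ℝ}
    (hf : ConvexOn ℝ S f) (hx : x ∈ S) (hy : y ∈ S) (hf' : HasDerivAt f f' x) :
    f x + f' * (y - x) ≤ f y := by
  rcases lt_trichotomy x y with hxy | rfl | hyx
  · have := hf.le_slope_of_hasDerivAt hx hy hxy hf'
    rw [slope_def_field, le_div_iff₀ (sub_pos.mpr hxy)] at this
    linarith
  · simp
  · have := hf.slope_le_of_hasDerivAt hy hx hyx hf'
    rw [slope_def_field, div_le_iff₀ (sub_pos.mpr hyx)] at this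
    linarith

theorem hasDerivAt_one_add_rpow {x : ℝ} (p : ℝ) (hx : -1 < x) :
    HasDerivAt (fun y => (1 + y) ^ p) (p * (1 + x) ^ (p - 1)) x := by
  simpa using
    ((hasDerivAt_id' x).const_add 1).rpow_const (p := p) (Or.inl (by linarith : 1 + x ≠ 0))

theorem hasDerivAt_one_add_rpow_sub_mul_sq {x : ℝ} (p c : ℝ) (hx : -1 < x) :
    HasDerivAt (fun y => (1 + y) ^ p - c * y ^ 2) (p * (1 + x) ^ (p - 1) - c * (2 * x)) x := by
  simpa using (hasDerivAt_one_add_rpow p hx).fun_sub ((hasDerivAt_pow 2 x).const_mul c)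

theorem convexOn_one_add_rpow_sub_mul_sq {m c r : ℝ} (hm1 : 1 ≤ m) (hm2 : m ≤ 2)
    (hc : 2 * c ≤ m * (m - 1) * (1 + r) ^ (m - 2)) :
    ConvexOn ℝ (Ioc (-1) r) (fun x => (1 + x) ^ m - c * x ^ 2) := by
  refine convexOn_of_hasDerivWithinAt2_nonneg (convex_Ioc _ _)
    (f' := fun x => m * (1 + x) ^ (m - 1) - c * (2 * x))
    (f'' := fun x => m * ((m - 1) * (1 + x) ^ (m - 1 - 1)) - c * 2)
    (fun x hx => (hasDerivAt_one_add_rpow_sub_mul_sq m c hx.1).continuousAt.continuousWithinAt)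
    ?_ ?_ ?_ <;> rw [interior_Ioc]
  · exact fun x hx => (hasDerivAt_one_add_rpow_sub_mul_sq m c hx.1).hasDerivWithinAt
  · intro x hx
    simpa using (((hasDerivAt_one_add_rpow (m - 1) hx.1).const_mul m).fun_sub
      (((hasDerivAt_id x).const_mul 2).const_mul c)).hasDerivWithinAt
  · intro x hx
    have hpow : (1 + r) ^ (m - 2) ≤ (1 + x) ^ (m - 2) :=
      Real.rpow_le_rpow_of_nonpos (by linarith [hx.1]) (by linarith [hx.2]) (by linarith)
    have hmm : 0 ≤ m * (m - 1) := mul_nonneg (by linarith) (by linarith)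
    rw [show m - 1 - 1 = m - 2 by ring]
    linarith [mul_le_mul_of_nonneg_left hpow hmm]

theorem one_add_mul_add_mul_sq_le_one_add_rpow {m c r x : ℝ} (hm1 : 1 ≤ m) (hm2 : m ≤ 2)
    (hr : 0 ≤ r) (hc : 2 * c ≤ m * (m - 1) * (1 + r) ^ (m - 2)) (hx1 : -1 < x) (hxr : x ≤ r) :
    1 + m * x + c * x ^ 2 ≤ (1 + x) ^ m := by
  have hderiv : HasDerivAt (fun x => (1 + x) ^ m - c * x ^ 2) m 0 := by
    simpa using hasDerivAt_one_add_rpow_sub_mul_sq m c (by norm_num : (-1 : ℝ) < 0)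
  have := (convexOn_one_add_rpow_sub_mul_sq hm1 hm2 hc).add_mul_sub_le_of_hasDerivAt
    ⟨by norm_num, hr⟩ ⟨hx1, hxr⟩ hderiv
  simp only [add_zero, Real.one_rpow, sub_zero] at this
  linarith

theorem pointwise_lower_bound_rpow (m η : ℝ) (hm1 : 1 < m) (hm2 : m < 2)
    (hη : |η| ≤ 1 / 2) :
    (1 + η) ^ m ≥ 1 + m * η + (m * (m - 1) / 2) * ((2:ℝ) / 3) ^ (2 - m) * η ^ 2 := by
  obtain ⟨hη1, hη2⟩ := abs_le.mp hη
  have hbase : ((2 : ℝ) / 3) ^ (2 - m) = (1 + 1 / 2) ^ (m - 2) := by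
    rw [← neg_sub m 2, Real.rpow_neg (by norm_num), ← Real.inv_rpow (by norm_num)]
    norm_num
  refine one_add_mul_add_mul_sq_le_one_add_rpow hm1.le hm2.le (by norm_num) ?_ (by linarith) hη2
  rw [hbase]
  linarith
end

section
/- Let d ≥ 1, m ∈ (1,2), L ≥ 1, ε₀ > 0, and let ρ : 𝕋_L^d → [0,∞) be continuous with ∫ρ dx = 1 and maximum R = ρ(x₀) attained at x₀. Suppose that |∇ρ^{m−1}(x)| ≤ κ₁ ε₀ for a.e. x (in the sense that ρ^{m−1} is κ₁ε₀-Lipschitz). Then R ≤ κ₄ · max{ε₀^{d/(d(m−1)+1)}, L^{−d}} for a constant κ₄ depending only on d, m, κ₁. -/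
noncomputable section
open MeasureTheory
open scoped BigOperators

/-- The box `[-L/2, L/2]^d`, a fundamental domain of the torus `𝕋_L^d`. -/
def box (d : ℕ) (L : ℝ) : Set (EuclideanSpace ℝ (Fin d)) :=
  {x | ∀ i, x i ∈ Set.Ioc (-(L / 2)) (L / 2)}

/-- `f` is `L`-periodic in each coordinate direction (i.e. a function on `𝕋_L^d`). -/
def PeriodicL (d : ℕ) (L : ℝ) (f : EuclideanSpace ℝ (Fin d) → ℝ) : Prop :=
  ∀ (x : EuclideanSpace ℝ (Fin d)) (i : Fin d),
    f (x + L • EuclideanSpace.single i (1:ℝ)) = f x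

/-- Pairing between integer frequency `k` and `x`. -/
def dotZ (d : ℕ) (k : Fin d → ℤ) (x : EuclideanSpace ℝ (Fin d)) : ℝ :=
  ∑ i, (k i : ℝ) * x i

/-- The Fourier coefficient `f̂(k) = ∫_{𝕋_L^d} f(x) e^{-i k·x} dx`,
with `k` ranging over `(2π/L)ℤ^d`. -/
def fCoeff (d : ℕ) (L : ℝ) (f : EuclideanSpace ℝ (Fin d) → ℝ) (k : Fin d → ℤ) : ℂ :=
  ∫ x in box d L,
    (f x : ℂ) * Complex.exp (-Complex.I * ((2 * Real.pi / L : ℝ) : ℂ) * ((dotZ d k x : ℝ) : ℂ))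

/-- Periodic convolution `(V ∗ ρ)(x) = ∫_{𝕋_L^d} V(x−y) ρ(y) dy`. -/
def pconv (d : ℕ) (L : ℝ) (V ρ : EuclideanSpace ℝ (Fin d) → ℝ)
    (x : EuclideanSpace ℝ (Fin d)) : ℝ :=
  ∫ y in box d L, V (x - y) * ρ y

/-!
Since `ρ^(m-1)` is `κ₁ε₀`-Lipschitz, `ρ ≥ R / 2^(1/(m-1))` on the ball of radius
`r = min (R^(m-1) / (2κ₁ε₀)) (L/2)` around `x₀`. That ball lies in the translate of the box
`[-L/2, L/2]^d` by `x₀`, which is again a fundamental domain of the lattice `(Lℤ)^d`, so the unit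
mass of `ρ` bounds `R r^d` by a constant depending on `d` and `m` only. The two possible values
of `r` give the two terms `ε₀^(d/(d(m-1)+1))` and `L^(-d)` of the bound.
-/

open Set Metric
open scoped Pointwise

def periodAddSubgroup {α β : Type*} [AddCommGroup α] (f : α → β) : AddSubgroup α where
  carrier := {c | Function.Periodic f c}
  zero_mem' := fun x => by simp
  add_mem' := Function.Periodic.add_period
  neg_mem' := Function.Periodic.neg

theorem div_rpow_inv_le_of_lipschitzWith_rpow {X : Type*} [PseudoMetricSpace X] {f : X → ℝ}
    (hf : ∀ x, 0 ≤ f x) {p : ℝ} (hp : 0 < p) {K : NNReal} (hlip : LipschitzWith K fun x => f x ^ p)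
    {x y : X} (hxy : K * dist x y ≤ f x ^ p / 2) : f x / 2 ^ p⁻¹ ≤ f y := by
  have hfx := Real.rpow_nonneg (hf x) p
  have hy : f x ^ p / 2 ≤ f y ^ p := by
    have := (le_abs_self _).trans ((Real.dist_eq _ _).symm.trans_le (hlip.dist_le_mul x y))
    linarith
  calc f x / 2 ^ p⁻¹ = (f x ^ p / 2) ^ p⁻¹ := by
        rw [Real.div_rpow hfx zero_le_two, Real.rpow_rpow_inv (hf x) hp.ne']
    _ ≤ (f y ^ p) ^ p⁻¹ := by gcongr
    _ = f y := Real.rpow_rpow_inv (hf y) hp.ne'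

section Torus

variable {d : ℕ} {L : ℝ}

def torusLattice (d : ℕ) (L : ℝ) : AddSubgroup (EuclideanSpace ℝ (Fin d)) where
  carrier := {x | ∀ i, x i ∈ AddSubgroup.zmultiples L}
  zero_mem' := fun _ => zero_mem _
  add_mem' hx hy i := add_mem (hx i) (hy i)
  neg_mem' hx i := neg_mem (hx i)

instance : Countable (torusLattice d L) := by
  refine Set.Countable.to_subtype ((Set.countable_range
    fun k : Fin d → ℤ => WithLp.toLp 2 fun i => k i • L).mono fun x hx => ?_)
  choose k hk using hx
  exact ⟨k, by ext i; exact hk i⟩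

theorem torusLattice_le_periodAddSubgroup {ρ : EuclideanSpace ℝ (Fin d) → ℝ}
    (hρ : PeriodicL d L ρ) : torusLattice d L ≤ periodAddSubgroup ρ := by
  intro g hg
  rw [← (EuclideanSpace.basisFun (Fin d) ℝ).sum_repr g]
  refine sum_mem fun i _ => ?_
  obtain ⟨k, hk⟩ := hg i
  have : Function.Periodic ρ (L • EuclideanSpace.single i (1 : ℝ)) := fun x => hρ x i
  simp only [EuclideanSpace.basisFun_repr, EuclideanSpace.basisFun_apply, ← hk, smul_assoc]
  exact zsmul_mem this k

theorem measurableSet_box : MeasurableSet (box d L) := by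
  have : box d L = ⋂ i, (fun x : EuclideanSpace ℝ (Fin d) => x i) ⁻¹' Ioc (-(L / 2)) (L / 2) := by
    ext; simp [box]
  rw [this]
  exact .iInter fun i => measurableSet_Ioc.preimage (EuclideanSpace.proj i).continuous.measurable

theorem isAddFundamentalDomain_box (hL : 0 < L) :
    IsAddFundamentalDomain (torusLattice d L) (box d L) := by
  refine .mk' measurableSet_box.nullMeasurableSet fun x => ?_
  have hL2 : -(L / 2) + L = L / 2 := by ring
  choose k hk hu using fun i => existsUnique_add_zsmul_mem_Ioc hL (x i) (-(L / 2))
  simp only [hL2] at hk hu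
  refine ⟨⟨WithLp.toLp 2 fun i => k i • L, fun i => ⟨k i, rfl⟩⟩, fun i => ?_, ?_⟩
  · simpa [add_comm] using hk i
  · rintro ⟨g, hg⟩ hgx
    ext i
    obtain ⟨n, hn : n • L = g i⟩ := hg i
    rw [← hn, hu i n]
    show x i + n • L ∈ _
    rw [add_comm, hn]
    exact hgx i

theorem setIntegral_vadd_box (hL : 0 < L) {ρ : EuclideanSpace ℝ (Fin d) → ℝ}
    (hρ : PeriodicL d L ρ) (c : EuclideanSpace ℝ (Fin d)) :
    ∫ x in c +ᵥ box d L, ρ x = ∫ x in box d L, ρ x :=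
  ((isAddFundamentalDomain_box hL).vadd_of_comm c).setIntegral_eq (isAddFundamentalDomain_box hL)
    fun g x => by
      show ρ (g + x) = ρ x
      rw [add_comm]
      exact torusLattice_le_periodAddSubgroup hρ g.2 x

theorem ball_subset_vadd_box {r : ℝ} (hr : r ≤ L / 2) (c : EuclideanSpace ℝ (Fin d)) :
    ball c r ⊆ c +ᵥ box d L := by
  intro y hy
  rw [mem_vadd_set_iff_neg_vadd_mem]
  intro i
  have : |y i - c i| < L / 2 := calc
    |y i - c i| = ‖(y - c) i‖ := rfl
    _ ≤ ‖y - c‖ := PiLp.norm_apply_le _ i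
    _ < L / 2 := (mem_ball_iff_norm.mp hy).trans_le hr
  rw [abs_lt] at this
  show -c i + y i ∈ Ioc _ _
  constructor <;> linarith

end Torus

def unitBallVolume (d : ℕ) : ℝ := volume.real (ball (0 : EuclideanSpace ℝ (Fin d)) 1)

theorem unitBallVolume_pos (d : ℕ) : 0 < unitBallVolume d :=
  ENNReal.toReal_pos (measure_ball_pos volume _ one_pos).ne' measure_ball_lt_top.ne

theorem measureReal_ball_eq_pow_mul_unitBallVolume {d : ℕ} (c : EuclideanSpace ℝ (Fin d))
    {r : ℝ} (hr : 0 < r) : volume.real (ball c r) = r ^ d * unitBallVolume d := by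
  rw [measureReal_def, Measure.addHaar_ball_of_pos _ _ hr, finrank_euclideanSpace_fin,
    ENNReal.toReal_mul, ENNReal.toReal_ofReal (by positivity), unitBallVolume, measureReal_def]

theorem mul_pow_le_of_lipschitzWith_rpow {d : ℕ} {L : ℝ} (hL : 0 < L)
    {ρ : EuclideanSpace ℝ (Fin d) → ℝ} (hρ : PeriodicL d L ρ) (hpos : ∀ x, 0 ≤ ρ x)
    (hmass : ∫ x in box d L, ρ x = 1) {p : ℝ} (hp : 0 < p) {K : NNReal}
    (hlip : LipschitzWith K fun x => ρ x ^ p) (x₀ : EuclideanSpace ℝ (Fin d)) {r : ℝ}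
    (hr : 0 < r) (hrL : r ≤ L / 2) (hrK : K * r ≤ ρ x₀ ^ p / 2) :
    ρ x₀ * r ^ d ≤ 2 ^ p⁻¹ / unitBallVolume d := by
  have hsub := ball_subset_vadd_box hrL x₀
  -- a non-integrable function would have integral `0`, not `1`
  have hint : IntegrableOn ρ (x₀ +ᵥ box d L) :=
    .of_integral_ne_zero (by rw [setIntegral_vadd_box hL hρ, hmass]; exact one_ne_zero)
  have hball : ρ x₀ / 2 ^ p⁻¹ * (r ^ d * unitBallVolume d) ≤ 1 := calc
    _ = ρ x₀ / 2 ^ p⁻¹ * volume.real (ball x₀ r) := by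
      rw [measureReal_ball_eq_pow_mul_unitBallVolume _ hr]
    _ ≤ ∫ y in ball x₀ r, ρ y :=
      setIntegral_ge_of_const_le_real measurableSet_ball measure_ball_lt_top.ne
        (fun y hy => div_rpow_inv_le_of_lipschitzWith_rpow hpos hp hlip
          ((mul_le_mul_of_nonneg_left (mem_ball'.mp hy).le K.2).trans hrK))
        (hint.mono_set hsub)
    _ ≤ ∫ y in x₀ +ᵥ box d L, ρ y := setIntegral_mono_set hint (ae_of_all _ hpos) hsub.eventuallyLE
    _ = 1 := by rw [setIntegral_vadd_box hL hρ, hmass]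
  rw [le_div_iff₀ (unitBallVolume_pos d), mul_assoc]
  rwa [div_mul_eq_mul_div, div_le_one (by positivity)] at hball

theorem le_mul_rpow_of_mul_div_pow_le {R C a ε p : ℝ} {d : ℕ} (hR : 0 ≤ R) (ha : 0 < a)
    (hε : 0 < ε) (hp : 0 < p) (h : R * (R ^ p / (a * ε)) ^ d ≤ C) :
    R ≤ (C * a ^ d) ^ ((d : ℝ) * p + 1)⁻¹ * ε ^ ((d : ℝ) / ((d : ℝ) * p + 1)) := by
  have hβ : 0 < (d : ℝ) * p + 1 := by positivity
  have hC : 0 ≤ C := le_trans (by have := Real.rpow_nonneg hR p; positivity) h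
  have hRβ : R ^ ((d : ℝ) * p + 1) ≤ C * a ^ d * ε ^ (d : ℝ) := by
    rw [Real.rpow_add' hR hβ.ne', Real.rpow_one, mul_comm (d : ℝ), Real.rpow_mul hR,
      Real.rpow_natCast, Real.rpow_natCast, mul_comm, mul_assoc, ← mul_pow]
    rwa [div_pow, mul_div_assoc', div_le_iff₀ (by positivity)] at h
  calc R = (R ^ ((d : ℝ) * p + 1)) ^ ((d : ℝ) * p + 1)⁻¹ := (Real.rpow_rpow_inv hR hβ.ne').symm
    _ ≤ (C * a ^ d * ε ^ (d : ℝ)) ^ ((d : ℝ) * p + 1)⁻¹ := by gcongr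
    _ = (C * a ^ d) ^ ((d : ℝ) * p + 1)⁻¹ * ε ^ ((d : ℝ) / ((d : ℝ) * p + 1)) := by
      rw [Real.mul_rpow (by positivity) (by positivity), ← Real.rpow_mul hε.le, div_eq_mul_inv]

theorem le_mul_rpow_neg_of_mul_div_pow_le {R C L : ℝ} {d : ℕ} (hL : 0 < L)
    (h : R * (L / 2) ^ d ≤ C) : R ≤ C * 2 ^ d * L ^ (-(d : ℝ)) := by
  rw [Real.rpow_neg hL.le, Real.rpow_natCast, ← div_eq_mul_inv, le_div_iff₀ (by positivity)]
  rwa [div_pow, mul_div_assoc', div_le_iff₀ (by positivity)] at h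

theorem max_bound_of_lipschitz_pressure_general (d : ℕ) (m : ℝ)
    (hm1 : 1 < m) (κ₁ : ℝ) (hκ₁ : 0 < κ₁) :
    ∃ κ₄ : ℝ, 0 < κ₄ ∧
      ∀ (L ε₀ : ℝ), 1 ≤ L → 0 < ε₀ →
      ∀ ρ : EuclideanSpace ℝ (Fin d) → ℝ, Continuous ρ → PeriodicL d L ρ →
        (∀ x, 0 ≤ ρ x) → (∫ x in box d L, ρ x) = 1 →
        ∀ x₀ : EuclideanSpace ℝ (Fin d), (∀ x, ρ x ≤ ρ x₀) →
        LipschitzWith (Real.toNNReal (κ₁ * ε₀)) (fun x => ρ x ^ (m - 1)) →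
        ρ x₀ ≤ κ₄ * max (ε₀ ^ ((d : ℝ) / ((d : ℝ) * (m - 1) + 1))) (L ^ (-(d : ℝ))) := by
  have hp : 0 < m - 1 := sub_pos.mpr hm1
  set C := 2 ^ (m - 1)⁻¹ / unitBallVolume d
  have hC : 0 < C := div_pos (by positivity) (unitBallVolume_pos d)
  refine ⟨max (C * 2 ^ d) ((C * (2 * κ₁) ^ d) ^ ((d : ℝ) * (m - 1) + 1)⁻¹), by positivity, ?_⟩
  intro L ε₀ hL hε ρ _ hρ hpos hmass x₀ _ hlip
  have hL0 : 0 < L := one_pos.trans_le hL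
  have hK : (Real.toNNReal (κ₁ * ε₀) : ℝ) = κ₁ * ε₀ := Real.coe_toNNReal _ (by positivity)
  rcases (hpos x₀).eq_or_lt with hR0 | hR0
  · rw [← hR0]; positivity
  rcases le_total (ρ x₀ ^ (m - 1) / (2 * κ₁ * ε₀)) (L / 2) with hr | hr
  · have hmass := mul_pow_le_of_lipschitzWith_rpow hL0 hρ hpos hmass hp hlip x₀ (by positivity) hr
      (by rw [hK]; exact le_of_eq (by field_simp))
    calc ρ x₀ ≤ (C * (2 * κ₁) ^ d) ^ ((d : ℝ) * (m - 1) + 1)⁻¹ *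
          ε₀ ^ ((d : ℝ) / ((d : ℝ) * (m - 1) + 1)) :=
        le_mul_rpow_of_mul_div_pow_le hR0.le (by positivity) hε hp hmass
      _ ≤ _ := mul_le_mul (le_max_right _ _) (le_max_left _ _) (by positivity) (by positivity)
  · have hmass := mul_pow_le_of_lipschitzWith_rpow hL0 hρ hpos hmass hp hlip x₀ (by positivity)
      le_rfl (by rw [hK]; calc
        κ₁ * ε₀ * (L / 2) ≤ κ₁ * ε₀ * (ρ x₀ ^ (m - 1) / (2 * κ₁ * ε₀)) := by gcongr
        _ = ρ x₀ ^ (m - 1) / 2 := by field_simp)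
    calc ρ x₀ ≤ C * 2 ^ d * L ^ (-(d : ℝ)) := le_mul_rpow_neg_of_mul_div_pow_le hL0 hmass
      _ ≤ _ := mul_le_mul (le_max_left _ _) (le_max_right _ _) (by positivity) (by positivity)

/-- A priori bound on the maximum of a stationary-type density: if `ρ^{m−1}` is
`κ₁ε₀`-Lipschitz and `ρ` has unit mass on `𝕋_L^d`, then its maximum `R = ρ(x₀)`
satisfies `R ≤ κ₄ max{ε₀^{d/(d(m−1)+1)}, L^{−d}}` with `κ₄ = κ₄(d, m, κ₁)`. -/
theorem max_bound_of_lipschitz_pressure (d : ℕ) (hd : 1 ≤ d) (m : ℝ)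
    (hm1 : 1 < m) (hm2 : m < 2) (κ₁ : ℝ) (hκ₁ : 0 < κ₁) :
    ∃ κ₄ : ℝ, 0 < κ₄ ∧
      ∀ (L ε₀ : ℝ), 1 ≤ L → 0 < ε₀ →
      ∀ ρ : EuclideanSpace ℝ (Fin d) → ℝ, Continuous ρ → PeriodicL d L ρ →
        (∀ x, 0 ≤ ρ x) → (∫ x in box d L, ρ x) = 1 →
        ∀ x₀ : EuclideanSpace ℝ (Fin d), (∀ x, ρ x ≤ ρ x₀) →
        LipschitzWith (Real.toNNReal (κ₁ * ε₀)) (fun x => ρ x ^ (m - 1)) →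
        ρ x₀ ≤ κ₄ * max (ε₀ ^ ((d : ℝ) / ((d : ℝ) * (m - 1) + 1))) (L ^ (-(d : ℝ))) :=
  max_bound_of_lipschitz_pressure_general d m hm1 κ₁ hκ₁
end
end
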